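/- arXiv:2107.09339 — 2 statements merged into one kernel-verified Lean document; each statement's English description precedes it below -/
import Mathlib

section
/- Let λ be a singular cardinal such that cf(λ) is not a Jonsson cardinal, and suppose UB_λ fails. Then there is no sequence ⟨U_i : i < λ⁺⟩ of cofinal subsets U_i ∈ [λ]^{cf(λ)} of λ together with, for each i < λ⁺, an injective sequence ⟨(α_{i,j}, β_{i,j}) : j < i⟩ of pairs with α_{i,j} ∈ U_i, β_{i,j} ∈ U_j. (Contrapositive: from such sequences one can construct a function f : [λ⁺]^{<ω} → λ⁺ witnessing UB_λ.) -/
open Cardinal Set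

/-- `x` is closed under `f : [λ⁺]^{<ω} → λ⁺`. -/
def ClosedUnder (f : Finset Ordinal → Ordinal) (x : Set Ordinal) : Prop :=
  ∀ s : Finset Ordinal, (↑s : Set Ordinal) ⊆ x → f s ∈ x

/-- Usuba's principle `UB_λ`. -/
def UB (lam : Cardinal.{0}) : Prop :=
  ∃ f : Finset Ordinal → Ordinal,
    (∀ s : Finset Ordinal, (↑s : Set Ordinal) ⊆ Set.Iio (Order.succ lam).ord →
      f s < (Order.succ lam).ord) ∧
    ∀ x y : Set Ordinal, x ⊆ Set.Iio (Order.succ lam).ord →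
      y ⊆ Set.Iio (Order.succ lam).ord → ClosedUnder f x → ClosedUnder f y →
      x ∩ Set.Iio lam.ord = y ∩ Set.Iio lam.ord →
      sSup (x ∩ Set.Iio lam.ord) = lam.ord →
      x ⊆ y ∨ y ⊆ x

/-- `κ` is a Jonsson cardinal. -/
def IsJonsson (κ : Cardinal.{0}) : Prop :=
  ∀ f : Finset Ordinal → Ordinal,
    (∀ s : Finset Ordinal, (↑s : Set Ordinal) ⊆ Set.Iio κ.ord → f s < κ.ord) →
    ∃ H : Set Ordinal, H ⊆ Set.Iio κ.ord ∧ #H = Cardinal.lift.{1} κ ∧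
      ∀ n : ℕ, {o : Ordinal | ∃ s : Finset Ordinal,
        (↑s : Set Ordinal) ⊆ H ∧ s.card = n ∧ f s = o} ≠ Set.Iio κ.ord

/-- There is a sequence `⟨U_i : i < λ⁺⟩` of cofinal subsets `U_i ∈ [λ]^{cf(λ)}` of `λ`
together with, for each `i < λ⁺`, an injective sequence `⟨(α_{i,j}, β_{i,j}) : j < i⟩`
of pairs with `α_{i,j} ∈ U_i` and `β_{i,j} ∈ U_j`. -/
def BadSeq (lam : Cardinal.{0}) : Prop :=
  ∃ (U : Ordinal → Set Ordinal) (a b : Ordinal → Ordinal → Ordinal),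
    (∀ i < (Order.succ lam).ord,
      U i ⊆ Set.Iio lam.ord ∧ sSup (U i) = lam.ord ∧ #(U i) = Cardinal.lift.{1} lam.ord.cof) ∧
    (∀ i < (Order.succ lam).ord, ∀ j < i, a i j ∈ U i ∧ b i j ∈ U j) ∧
    (∀ i < (Order.succ lam).ord, ∀ j₁ < i, ∀ j₂ < i,
      a i j₁ = a i j₂ → b i j₁ = b i j₂ → j₁ = j₂)

/-!
Fix `g : [cf λ]^{<ω} → cf λ` witnessing that `cf λ` is not Jonsson and transport it to each
`U_i` along a bijection `U_i ≃ cf λ`. The function witnessing `UB_λ` lets a closed set `x`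
containing some `i ≥ λ` produce `i + 1`, the least element of `U_i` above any `ξ ∈ x ∩ λ`, the
`g`-images of finite subsets of `U_i ∩ x`, and the index `j < i` of any pair `(α, β)` from
`x ∩ λ` with `(α_{i,j}, β_{i,j}) = (α, β)`. If `x ∩ λ` is cofinal in `λ`, then so is `U_i ∩ x`;
hence it has size `cf λ`, the transported `g` maps its finite subsets onto `U_i`, and `U_i ⊆ x`.
Finally, if `x ∩ λ = y ∩ λ` and `i ∈ x \ y`, `i' ∈ y \ x` with `i < i'`, then
`α_{i',i} ∈ U_{i'} ⊆ y` and `β_{i',i} ∈ U_i ⊆ x ∩ λ ⊆ y`, so `i ∈ y`.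
-/

def UnboundedBelow (lo : Ordinal) (H : Set Ordinal) : Prop :=
  ∀ ξ < lo, ∃ γ ∈ H, ξ < γ

theorem unboundedBelow_of_sSup_eq {lo : Ordinal} {H : Set Ordinal} (hH : H ⊆ Iio lo)
    (hsup : sSup H = lo) : UnboundedBelow lo H := fun _ hξ =>
  (lt_csSup_iff' (bddAbove_Iio.mono hH)).1 (hsup ▸ hξ)

theorem lift_cof_le_mk_of_unboundedBelow {lo : Ordinal.{u}} {H : Set Ordinal} (hH : H ⊆ Iio lo)
    (hunb : UnboundedBelow lo H) : lift.{u + 1} lo.cof ≤ #H := by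
  have hcof : IsCofinal (Subtype.val ⁻¹' H : Set (Iio lo)) := fun ξ =>
    let ⟨γ, hγ, hξγ⟩ := hunb ξ ξ.2
    ⟨⟨γ, hH hγ⟩, hγ, hξγ.le⟩
  calc lift.{u + 1} lo.cof = Order.cof (Iio lo) := by rw [Ordinal.cof_Iio, Ordinal.lift_cof]
    _ ≤ #(Subtype.val ⁻¹' H : Set (Iio lo)) := Order.cof_le hcof
    _ = #H := by
      simpa using mk_preimage_of_injective_of_subset_range (Subtype.val : Iio lo → Ordinal) H
        Subtype.val_injective (by rwa [Subtype.range_coe])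

/-- The failure of the Jonsson property of `κ`, transported to a set `S` of size `κ`. -/
def IsNonJonssonWitness (κ : Cardinal.{0}) (S : Set Ordinal.{0})
    (g : Finset Ordinal → Ordinal) : Prop :=
  (∀ s : Finset Ordinal, ↑s ⊆ S → g s ∈ S) ∧
    ∀ H ⊆ S, #H = lift.{1} κ → ∀ γ ∈ S, ∃ u : Finset Ordinal, ↑u ⊆ H ∧ g u = γ

theorem exists_isNonJonssonWitness_Iio {κ : Cardinal.{0}} (hκ : ¬ IsJonsson κ) :
    ∃ g, IsNonJonssonWitness κ (Iio κ.ord) g := by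
  simp only [IsJonsson, not_forall, not_exists, not_and, not_not] at hκ
  obtain ⟨g, hg, hcover⟩ := hκ
  refine ⟨g, hg, fun H hH hcard δ hδ => ?_⟩
  obtain ⟨n, hn⟩ := hcover H hH hcard
  rw [← hn] at hδ
  obtain ⟨u, hu, -, rfl⟩ := hδ
  exact ⟨u, hu, rfl⟩

theorem IsNonJonssonWitness.comp_bijOn {κ : Cardinal.{0}} {S T : Set Ordinal.{0}}
    {g : Finset Ordinal → Ordinal} (hg : IsNonJonssonWitness κ T g) {φ : Ordinal → Ordinal}
    (hφ : BijOn φ S T) :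
    IsNonJonssonWitness κ S (fun s => Function.invFunOn φ S (g (s.image φ))) := by
  have hψ : MapsTo (Function.invFunOn φ S) T S := hφ.surjOn.mapsTo_invFunOn
  have hinv : InvOn (Function.invFunOn φ S) φ S T := hφ.invOn_invFunOn
  refine ⟨fun s hs => hψ (hg.1 _ ?_), fun H hH hcard γ hγ => ?_⟩
  · rw [Finset.coe_image]
    exact (hφ.mapsTo.mono_left hs).image_subset
  obtain ⟨u, hu, hgu⟩ := hg.2 (φ '' H) (hφ.mapsTo.mono_left hH |>.image_subset)
    (by rw [mk_image_eq_of_injOn _ _ (hφ.injOn.mono hH), hcard]) (φ γ) (hφ.mapsTo hγ)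
  refine ⟨u.image (Function.invFunOn φ S), ?_, ?_⟩
  · intro η hη
    obtain ⟨δ, hδ, rfl⟩ := Finset.mem_image.1 hη
    obtain ⟨ζ, hζ, rfl⟩ := hu hδ
    rwa [hinv.1 (hH hζ)]
  · have hu' : (u.image (Function.invFunOn φ S)).image φ = u := by
      rw [Finset.image_image]
      refine (Finset.image_congr fun δ hδ => ?_).trans Finset.image_id
      obtain ⟨ζ, hζ, rfl⟩ := hu hδ
      exact hinv.2 (hφ.mapsTo (hH hζ))
    simp only [hu', hgu, hinv.1 hγ]

theorem exists_bijOn_Iio_of_mk_eq {κ : Cardinal.{0}} {S : Set Ordinal.{0}}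
    (hS : #S = lift.{1} κ) : ∃ φ : Ordinal → Ordinal, BijOn φ S (Iio κ.ord) := by
  classical
  obtain ⟨e⟩ : Nonempty (S ≃ Iio κ.ord) :=
    Cardinal.eq.1 (by rw [hS, mk_Iio_ordinal, card_ord])
  refine ⟨fun γ => if h : γ ∈ S then e ⟨γ, h⟩ else 0, fun γ hγ => by simp [hγ], ?_, ?_⟩
  · intro γ hγ η hη h
    simp only [dif_pos hγ, dif_pos hη] at h
    simpa using e.injective (Subtype.ext h)
  · intro δ hδ
    exact ⟨e.symm ⟨δ, hδ⟩, (e.symm _).2, by simp⟩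

theorem exists_isNonJonssonWitness {κ : Cardinal.{0}} (hκ : ¬ IsJonsson κ) {S : Set Ordinal.{0}}
    (hS : #S = lift.{1} κ) : ∃ g, IsNonJonssonWitness κ S g := by
  obtain ⟨g, hg⟩ := exists_isNonJonssonWitness_Iio hκ
  obtain ⟨φ, hφ⟩ := exists_bijOn_Iio_of_mk_eq hS
  exact ⟨_, hg.comp_bijOn hφ⟩

/-- Junk value `0` when `S` has no element above `ξ`. -/
noncomputable def leastAbove (S : Set Ordinal) (ξ : Ordinal) : Ordinal :=
  sInf {γ ∈ S | ξ < γ}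

theorem leastAbove_mem_of_lt {S : Set Ordinal} {ξ γ : Ordinal} (hγ : γ ∈ S) (hξγ : ξ < γ) :
    leastAbove S ξ ∈ S ∧ ξ < leastAbove S ξ :=
  csInf_mem (s := {γ ∈ S | ξ < γ}) ⟨γ, hγ, hξγ⟩

theorem leastAbove_mem_or_eq_zero (S : Set Ordinal) (ξ : Ordinal) :
    leastAbove S ξ ∈ S ∨ leastAbove S ξ = 0 := by
  rcases Set.eq_empty_or_nonempty {γ ∈ S | ξ < γ} with h | h
  · right; rw [leastAbove, h, Ordinal.sInf_empty]
  · left; exact (csInf_mem h).1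

/-- Junk value `0` when no `j < i` has `(a i j, b i j) = (α, β)`. -/
noncomputable def pairIndex (a b : Ordinal → Ordinal → Ordinal) (i α β : Ordinal) : Ordinal :=
  sInf {j | j < i ∧ a i j = α ∧ b i j = β}

theorem pairIndex_le (a b : Ordinal → Ordinal → Ordinal) (i α β : Ordinal) :
    pairIndex a b i α β ≤ i := by
  rcases Set.eq_empty_or_nonempty {j | j < i ∧ a i j = α ∧ b i j = β} with h | h
  · rw [pairIndex, h, Ordinal.sInf_empty]; exact zero_le
  · exact (csInf_mem h).1.le

theorem pairIndex_eq {a b : Ordinal → Ordinal → Ordinal} {i j : Ordinal}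
    (hinj : ∀ j₁ < i, ∀ j₂ < i, a i j₁ = a i j₂ → b i j₁ = b i j₂ → j₁ = j₂) (hj : j < i) :
    pairIndex a b i (a i j) (b i j) = j := by
  have : {j' | j' < i ∧ a i j' = a i j ∧ b i j' = b i j} = {j} := by
    ext j'
    exact ⟨fun ⟨hj', ha, hb⟩ => hinj j' hj' j hj ha hb, by rintro rfl; exact ⟨hj, rfl, rfl⟩⟩
  rw [pairIndex, this, csInf_singleton]

/-- The size of `T` selects the operation. A looked-up pair is built from the two least elements
of `T`; the remaining elements only pad `T`, so that its size also records whether the pair is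
increasing, decreasing or diagonal. -/
noncomputable def ubFunAt (U : Ordinal → Set Ordinal) (a b : Ordinal → Ordinal → Ordinal)
    (i : Ordinal) (T : Finset Ordinal) : Ordinal :=
  let t₀ := sInf (T : Set Ordinal)
  let t₁ := sInf (T.erase t₀ : Set Ordinal)
  match T.card with
  | 0 => i + 1
  | 1 => leastAbove (U i) t₀
  | 2 => pairIndex a b i t₀ t₁
  | 3 => pairIndex a b i t₁ t₀
  | 4 => pairIndex a b i t₀ t₀
  | _ => 0

variable {U : Ordinal → Set Ordinal} {a b : Ordinal → Ordinal → Ordinal} {i : Ordinal}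

theorem ubFunAt_singleton (ξ : Ordinal) : ubFunAt U a b i {ξ} = leastAbove (U i) ξ := by
  simp [ubFunAt]

theorem ubFunAt_pair {α β : Ordinal} (h : α < β) :
    ubFunAt U a b i {α, β} = pairIndex a b i α β := by
  simp [ubFunAt, Finset.card_pair h.ne, h.le, h.ne]

theorem ubFunAt_triple {α β μ : Ordinal} (hβα : β < α) (hαμ : α < μ) :
    ubFunAt U a b i {β, α, μ} = pairIndex a b i α β := by
  have hβμ := hβα.trans hαμ
  simp [ubFunAt, hβα.ne, hβμ.ne, hαμ.ne, hβα.le, hαμ.le, Finset.card_insert_of_notMem]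

theorem ubFunAt_quadruple {α μ₁ μ₂ μ₃ : Ordinal} (h₁ : α < μ₁) (h₂ : μ₁ < μ₂) (h₃ : μ₂ < μ₃) :
    ubFunAt U a b i {α, μ₁, μ₂, μ₃} = pairIndex a b i α α := by
  have h₁₂ := h₁.trans h₂
  have h₁₃ := h₁₂.trans h₃
  have h₂₃ := h₂.trans h₃
  simp [ubFunAt, h₁.ne, h₂.ne, h₃.ne, h₁₂.ne, h₁₃.ne, h₂₃.ne, h₁.le, h₁₂.le, h₁₃.le,
    Finset.card_insert_of_notMem]

theorem filter_union_eq_of_le_of_lt {α : Type*} [LinearOrder α] {lo : α} {A B : Finset α}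
    (hA : ∀ γ ∈ A, lo ≤ γ) (hB : ∀ γ ∈ B, γ < lo) :
    (A ∪ B).filter (lo ≤ ·) = A ∧ (A ∪ B).filter (· < lo) = B := by
  constructor
  · rw [Finset.filter_union, Finset.filter_true_of_mem hA,
      Finset.filter_false_of_mem fun γ hγ => not_le.2 (hB γ hγ), Finset.union_empty]
  · rw [Finset.filter_union, Finset.filter_false_of_mem fun γ hγ => not_lt.2 (hA γ hγ),
      Finset.filter_true_of_mem hB, Finset.empty_union]

open Classical in
/-- Here `lo` plays the role of `λ`; the presence of `i + 1` tags the call of `G i`. -/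
noncomputable def ubFun (lo : Ordinal) (U : Ordinal → Set Ordinal)
    (a b : Ordinal → Ordinal → Ordinal) (G : Ordinal → Finset Ordinal → Ordinal)
    (s : Finset Ordinal) : Ordinal :=
  let L := s.filter (lo ≤ ·)
  let T := s.filter (· < lo)
  let i := sInf (L : Set Ordinal)
  if L = {i} then ubFunAt U a b i T
  else if L = {i, i + 1} ∧ ↑T ⊆ U i then G i T
  else 0

variable {lo : Ordinal} {G : Ordinal → Finset Ordinal → Ordinal}

theorem ubFun_insert {T : Finset Ordinal} (hi : lo ≤ i) (hT : ∀ γ ∈ T, γ < lo) :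
    ubFun lo U a b G (insert i T) = ubFunAt U a b i T := by
  obtain ⟨hL, hT⟩ := filter_union_eq_of_le_of_lt (A := {i}) (by simpa using hi) hT
  rw [Finset.insert_eq]
  simp only [ubFun, hL, hT]
  simp

theorem ubFun_insert_insert {T : Finset Ordinal} (hi : lo ≤ i) (hT : ∀ γ ∈ T, γ < lo)
    (hTU : ↑T ⊆ U i) : ubFun lo U a b G (insert i (insert (i + 1) T)) = G i T := by
  have hlt : i < i + 1 := Order.lt_add_one_iff.2 le_rfl
  obtain ⟨hL, hT⟩ := filter_union_eq_of_le_of_lt (A := {i, i + 1})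
    (by simpa using ⟨hi, hi.trans hlt.le⟩) hT
  rw [show insert i (insert (i + 1) T) = {i, i + 1} ∪ T by
    rw [Finset.insert_union, ← Finset.insert_eq]]
  simp only [ubFun]
  rw [hL, hT]
  have hne : ({i, i + 1} : Finset Ordinal) ≠ {i} := fun h =>
    hlt.ne' (Finset.mem_singleton.1 (h ▸ by simp))
  simp [hne, hTU, hlt.le]

theorem ubFunAt_lt {O : Ordinal} (hO : Order.IsSuccLimit O) (hlo : lo < O) (hU : U i ⊆ Iio lo)
    (hi : i < O) (T : Finset Ordinal) : ubFunAt U a b i T < O := by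
  have hpair : ∀ α β, pairIndex a b i α β < O := fun α β => (pairIndex_le a b i α β).trans_lt hi
  unfold ubFunAt
  split
  · rw [← Order.succ_eq_add_one]
    exact hO.succ_lt hi
  · rcases leastAbove_mem_or_eq_zero (U i) (sInf (T : Set Ordinal)) with h | h
    · exact (hU h).trans hlo
    · exact h ▸ hO.bot_lt
  all_goals first | exact hpair _ _ | exact hO.bot_lt

theorem ubFun_lt {O : Ordinal} (hO : Order.IsSuccLimit O) (hlo : lo < O)
    (hU : ∀ i < O, U i ⊆ Iio lo) (hG : ∀ i < O, ∀ T : Finset Ordinal, ↑T ⊆ U i → G i T ∈ U i)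
    {s : Finset Ordinal} (hs : ↑s ⊆ Iio O) : ubFun lo U a b G s < O := by
  have hmin : ∀ L ⊆ s, L.Nonempty → sInf (L : Set Ordinal) < O := fun L hL hne =>
    hs (hL (csInf_mem (s := (L : Set Ordinal)) hne))
  simp only [ubFun]
  split_ifs with h₁ h₂
  · have hi := hmin _ (Finset.filter_subset _ s) (by rw [h₁]; simp)
    exact ubFunAt_lt hO hlo (hU _ hi) hi _
  · have hi := hmin _ (Finset.filter_subset _ s) (by rw [h₂.1]; simp)
    exact (hU _ hi (hG _ hi _ h₂.2)).trans hlo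
  · exact hO.bot_lt

theorem ClosedUnder.ubFunAt_mem {w : Set Ordinal} (hw : ClosedUnder (ubFun lo U a b G) w)
    (hi : i ∈ w) (hlo : lo ≤ i) {T : Finset Ordinal} (hTw : ↑T ⊆ w) (hT : ∀ γ ∈ T, γ < lo) :
    ubFunAt U a b i T ∈ w := by
  rw [← ubFun_insert hlo hT]
  exact hw _ (by simpa [Set.insert_subset_iff] using ⟨hi, hTw⟩)

theorem ClosedUnder.add_one_mem {w : Set Ordinal} (hw : ClosedUnder (ubFun lo U a b G) w)
    (hi : i ∈ w) (hlo : lo ≤ i) : i + 1 ∈ w :=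
  hw.ubFunAt_mem hi hlo (T := ∅) (by simp) (by simp)

theorem ClosedUnder.leastAbove_mem {w : Set Ordinal} (hw : ClosedUnder (ubFun lo U a b G) w)
    (hi : i ∈ w) (hlo : lo ≤ i) {ξ : Ordinal} (hξ : ξ ∈ w ∩ Iio lo) : leastAbove (U i) ξ ∈ w := by
  rw [← ubFunAt_singleton (a := a) (b := b)]
  exact hw.ubFunAt_mem hi hlo (by simpa using hξ.1) (by simpa using hξ.2)

theorem ClosedUnder.pairIndex_mem {w : Set Ordinal} (hw : ClosedUnder (ubFun lo U a b G) w)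
    (hi : i ∈ w) (hlo : lo ≤ i) (hunb : UnboundedBelow lo (w ∩ Iio lo)) {α β : Ordinal}
    (hα : α ∈ w ∩ Iio lo) (hβ : β ∈ w ∩ Iio lo) : pairIndex a b i α β ∈ w := by
  set z := w ∩ Iio lo
  have hloc : ∀ T : Finset Ordinal, ↑T ⊆ z → ubFunAt U a b i T ∈ w := fun T hT =>
    hw.ubFunAt_mem hi hlo (hT.trans inter_subset_left) fun γ hγ => (hT hγ).2
  rcases lt_trichotomy α β with h | rfl | h
  · rw [← ubFunAt_pair h]
    exact hloc _ (by simp [Set.insert_subset_iff, hα, hβ])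
  · obtain ⟨μ₁, hμ₁, h₁⟩ := hunb α hα.2
    obtain ⟨μ₂, hμ₂, h₂⟩ := hunb μ₁ hμ₁.2
    obtain ⟨μ₃, hμ₃, h₃⟩ := hunb μ₂ hμ₂.2
    rw [← ubFunAt_quadruple h₁ h₂ h₃]
    exact hloc _ (by simp [Set.insert_subset_iff, hα, hμ₁, hμ₂, hμ₃])
  · obtain ⟨μ, hμ, hαμ⟩ := hunb α hα.2
    rw [← ubFunAt_triple h hαμ]
    exact hloc _ (by simp [Set.insert_subset_iff, hβ, hα, hμ])

theorem ClosedUnder.subset_of_isNonJonssonWitness {w : Set Ordinal}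
    (hw : ClosedUnder (ubFun lo U a b G) w) (hi : i ∈ w) (hlo : lo ≤ i)
    (hunb : UnboundedBelow lo (w ∩ Iio lo)) (hUi : U i ⊆ Iio lo)
    (hUunb : UnboundedBelow lo (U i)) (hUcard : #(U i) = lift.{1} lo.cof)
    (hG : IsNonJonssonWitness lo.cof (U i) (G i)) : U i ⊆ w := by
  have hHunb : UnboundedBelow lo (U i ∩ w) := fun ξ hξ => by
    obtain ⟨μ, hμ, hξμ⟩ := hunb ξ hξ
    obtain ⟨γ, hγ, hμγ⟩ := hUunb μ hμ.2
    obtain ⟨hU, hlt⟩ := leastAbove_mem_of_lt hγ hμγ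
    exact ⟨_, ⟨hU, hw.leastAbove_mem hi hlo hμ⟩, hξμ.trans hlt⟩
  have hcard : #(U i ∩ w : Set Ordinal) = lift.{1} lo.cof :=
    le_antisymm (hUcard ▸ mk_le_mk_of_subset inter_subset_left)
      (lift_cof_le_mk_of_unboundedBelow (inter_subset_left.trans hUi) hHunb)
  intro γ hγ
  obtain ⟨u, hu, rfl⟩ := hG.2 _ inter_subset_left hcard γ hγ
  rw [← ubFun_insert_insert (a := a) (b := b) (G := G) hlo (fun δ hδ => hUi (hu hδ).1)
    fun δ hδ => (hu hδ).1]
  exact hw _ (by simpa [Set.insert_subset_iff] using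
    ⟨hi, hw.add_one_mem hi hlo, fun δ hδ => (hu hδ).2⟩)

theorem ClosedUnder.mem_of_pair_mem {y : Set Ordinal} (hy : ClosedUnder (ubFun lo U a b G) y)
    (hunb : UnboundedBelow lo (y ∩ Iio lo)) {j : Ordinal} (hi : i ∈ y) (hlo : lo ≤ i)
    (hinj : ∀ j₁ < i, ∀ j₂ < i, a i j₁ = a i j₂ → b i j₁ = b i j₂ → j₁ = j₂) (hj : j < i)
    (ha : a i j ∈ y ∩ Iio lo) (hb : b i j ∈ y ∩ Iio lo) : j ∈ y :=
  pairIndex_eq hinj hj ▸ hy.pairIndex_mem hi hlo hunb ha hb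

theorem subset_or_subset_of_closedUnder {lo O : Ordinal.{0}} {U : Ordinal → Set Ordinal}
    {a b : Ordinal → Ordinal → Ordinal} {G : Ordinal → Finset Ordinal → Ordinal}
    (hU : ∀ i < O, U i ⊆ Iio lo ∧ sSup (U i) = lo ∧ #(U i) = lift.{1} lo.cof)
    (hG : ∀ i < O, IsNonJonssonWitness lo.cof (U i) (G i))
    (hab : ∀ i < O, ∀ j < i, a i j ∈ U i ∧ b i j ∈ U j)
    (hinj : ∀ i < O, ∀ j₁ < i, ∀ j₂ < i, a i j₁ = a i j₂ → b i j₁ = b i j₂ → j₁ = j₂)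
    {x y : Set Ordinal} (hxO : x ⊆ Iio O) (hyO : y ⊆ Iio O)
    (hx : ClosedUnder (ubFun lo U a b G) x) (hy : ClosedUnder (ubFun lo U a b G) y)
    (hxy : x ∩ Iio lo = y ∩ Iio lo) (hsup : sSup (x ∩ Iio lo) = lo) : x ⊆ y ∨ y ⊆ x := by
  have hxunb := unboundedBelow_of_sSup_eq inter_subset_right hsup
  have hyunb : UnboundedBelow lo (y ∩ Iio lo) := hxy ▸ hxunb
  by_contra! h
  obtain ⟨i, hix, hiy⟩ := not_subset.1 h.1
  obtain ⟨i', hi'y, hi'x⟩ := not_subset.1 h.2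
  wlog hii' : i < i' generalizing x y i i'
  · rcases (not_lt.1 hii').lt_or_eq with hlt | rfl
    · exact this hyO hxO hy hx hxy.symm (hxy ▸ hsup) hyunb hxunb h.symm i' hi'y hi'x i hix hiy
        hlt
    · exact hi'x hix
  have hge : ∀ {w w' : Set Ordinal}, w ∩ Iio lo = w' ∩ Iio lo → ∀ k ∈ w, k ∉ w' → lo ≤ k :=
    fun {_ w'} hww' k hk hk' => not_lt.1 fun hlt => hk' (hww' ▸ ⟨hk, hlt⟩ : k ∈ w' ∩ Iio lo).1
  have hUsub : ∀ {w : Set Ordinal}, w ⊆ Iio O → ClosedUnder (ubFun lo U a b G) w →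
      UnboundedBelow lo (w ∩ Iio lo) → ∀ k ∈ w, lo ≤ k → U k ⊆ w ∩ Iio lo := by
    intro w hwO hw hwunb k hk hlok
    obtain ⟨hUk, hsupk, hcardk⟩ := hU k (hwO hk)
    exact subset_inter (hw.subset_of_isNonJonssonWitness hk hlok hwunb hUk
      (unboundedBelow_of_sSup_eq hUk hsupk) hcardk (hG k (hwO hk))) hUk
  obtain ⟨ha, hb⟩ := hab i' (hyO hi'y) i hii'
  have hi'lo := hge hxy.symm i' hi'y hi'x
  exact hiy (hy.mem_of_pair_mem hyunb hi'y hi'lo (hinj i' (hyO hi'y)) hii'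
    (hUsub hyO hy hyunb i' hi'y hi'lo ha)
    (hxy ▸ hUsub hxO hx hxunb i hix (hge hxy i hix hiy) hb))

theorem stmt4_general (lam : Cardinal.{0}) (hlam : ℵ₀ ≤ lam)
    (hJ : ¬ IsJonsson lam.ord.cof) (hUB : ¬ UB lam) :
    ¬ BadSeq lam := by
  rintro ⟨U, a, b, hU, hab, hinj⟩
  choose! G hG using fun i hi => exists_isNonJonssonWitness hJ (hU i hi).2.2
  have hO : Order.IsSuccLimit (Order.succ lam).ord :=
    isSuccLimit_ord (hlam.trans (Order.le_succ lam))
  have hlo : lam.ord < (Order.succ lam).ord := ord_lt_ord.2 (Order.lt_succ lam)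
  exact hUB ⟨ubFun lam.ord U a b G,
    fun s hs => ubFun_lt hO hlo (fun i hi => (hU i hi).1) (fun i hi => (hG i hi).1) hs,
    fun x y hxO hyO hx hy hxy hsup =>
      subset_or_subset_of_closedUnder hU hG hab hinj hxO hyO hx hy hxy hsup⟩

theorem stmt4 (lam : Cardinal.{0}) (hlam : ℵ₀ ≤ lam) (hsing : lam.ord.cof < lam)
    (hJ : ¬ IsJonsson lam.ord.cof) (hUB : ¬ UB lam) :
    ¬ BadSeq lam :=
  stmt4_general lam hlam hJ hUB
end

section
/- Suppose λ > μ are infinite cardinals, the Chang transfer principle (λ⁺, λ) ↠ (μ⁺, μ) holds, and M is a structure with universe λ⁺ and vocabulary of cardinality at most cf(λ) ≤ μ. If N ≺ M is an elementary substructure with |N| = μ⁺ and |N ∩ λ| = μ, and ⟨α_i : i < μ⁺⟩ enumerates in increasing order the first μ⁺ elements of N, then there exists i* < μ⁺ such that for all i < μ⁺, cl({α_i}, M) ∩ λ ⊆ ⋃_{j < i*} cl({α_j}, M). -/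
/-!
An element `x` of `cl({α_i}, M) ∩ λ` lies in `N ∩ λ`, and is then itself some `α_j`: as
`|N ∩ λ| = μ < μ⁺`, some `α_i` lies outside `λ`, hence above `x`, and the enumeration is an initial
segment of `N`. So `N ∩ λ` consists of at most `μ` of the `α_j`, and since `μ⁺` is regular their
indices are bounded by some `i* < μ⁺`.
-/

open Cardinal Set FirstOrder FirstOrder.Language FirstOrder.Language.Structure

/-- The Chang transfer principle `(λ⁺, λ) ↠ (μ⁺, μ)`. -/
def ChangTransfer (lam mu : Cardinal.{0}) : Prop :=
  ∀ (L : FirstOrder.Language.{0, 0}), L.card ≤ ℵ₀ →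
    ∀ (u : L.Relations 1) (M : Type 1) [L.Structure M],
      #M = Cardinal.lift.{1} (Order.succ lam) →
      #{x : M | RelMap u ![x]} = Cardinal.lift.{1} lam →
      ∃ N : L.ElementarySubstructure M,
        #N = Cardinal.lift.{1} (Order.succ mu) ∧
        #{x : M | x ∈ N ∧ RelMap u ![x]} = Cardinal.lift.{1} mu

universe u v

namespace Ordinal

theorem exists_lt_forall_lt_of_mk_lt_cof {s : Set Ordinal.{u}} {a : Ordinal.{u}}
    (ha : #s < (lift.{u + 1} a).cof) (hs : ∀ i ∈ s, i < a) : ∃ b < a, ∀ i ∈ s, i < b := by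
  have hbdd : BddAbove ((· + 1) '' s) := ⟨a, by
    rintro _ ⟨i, hi, rfl⟩
    exact Order.add_one_le_of_lt (hs i hi)⟩
  exact ⟨_, sSup_add_one_lt_of_lt_cof ha hs, fun i hi =>
    (lt_add_one i).trans_le (le_csSup hbdd (mem_image_of_mem _ hi))⟩

variable {β : Type v} {o : Ordinal.{u}} {α : Ordinal.{u} → β}

theorem exists_lt_notMem_of_lift_mk_lt (hα : InjOn α (Iio o)) {s : Set β}
    (hs : Cardinal.lift.{u} #s < Cardinal.lift.{v} o.card) : ∃ i < o, α i ∉ s := by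
  by_contra! h
  have hmaps : MapsTo α (Iio o) s := fun i hi => h i hi
  have hle := Cardinal.lift_mk_le_lift_mk_of_injective (hmaps.restrict_inj.2 hα)
  rw [Cardinal.mk_Iio_ordinal] at hle
  simp only [Cardinal.lift_lift] at hle
  have hs' := Cardinal.lift_lt.{max u v, u + 1}.2 hs
  simp only [Cardinal.lift_lift] at hs'
  exact hs'.not_ge hle

theorem exists_lt_forall_eq_of_lift_mk_lt_cof (hα : InjOn α (Iio o)) {s : Set β}
    (hs : Cardinal.lift.{u} #s < Cardinal.lift.{v} o.cof)
    (h : ∀ x ∈ s, ∃ j < o, x = α j) : ∃ b < o, ∀ x ∈ s, ∃ j < b, x = α j := by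
  set J := Iio o ∩ α ⁻¹' s
  have hJ : Cardinal.lift.{v} #J ≤ Cardinal.lift.{u + 1} #s := by
    rw [← mk_image_eq_of_injOn_lift _ _ (hα.mono inter_subset_left)]
    exact Cardinal.lift_le.2 (mk_le_mk_of_subset (image_subset_iff.2 inter_subset_right))
  have hJcof : #J < (lift.{u + 1} o).cof := by
    rw [← lift_cof]
    have hs' := Cardinal.lift_lt.{max u v, u + 1}.2 hs
    simp only [Cardinal.lift_lift] at hs'
    rw [← Cardinal.lift_lt.{u + 1, v}, Cardinal.lift_lift]
    exact hJ.trans_lt hs'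
  obtain ⟨b, hb, hJb⟩ := exists_lt_forall_lt_of_mk_lt_cof hJcof fun i hi => hi.1
  refine ⟨b, hb, fun x hx => ?_⟩
  obtain ⟨j, hj, rfl⟩ := h x hx
  exact ⟨j, hJb j ⟨hj, hx⟩, rfl⟩

end Ordinal

theorem stmt12_general (lam mu : Cardinal.{0}) (hmu : ℵ₀ ≤ mu)
    (L : FirstOrder.Language.{0, 0})
    (inst : L.Structure {o : Ordinal // o < (Order.succ lam).ord})
    -- `N ≺ M` with `|N| = μ⁺` and `|N ∩ λ| = μ`
    (N : L.ElementarySubstructure {o : Ordinal // o < (Order.succ lam).ord})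
    (hN₂ : #{x : {o : Ordinal // o < (Order.succ lam).ord} | x ∈ N ∧ x.val < lam.ord}
      = Cardinal.lift.{1} mu)
    -- `⟨α_i : i < μ⁺⟩` enumerates in increasing order the first `μ⁺` elements of `N`
    (α : Ordinal → {o : Ordinal // o < (Order.succ lam).ord})
    (hmem : ∀ i < (Order.succ mu).ord, α i ∈ N)
    (hmono : ∀ i j : Ordinal, i < j → j < (Order.succ mu).ord → (α i).val < (α j).val)
    (hinit : ∀ x ∈ N, ∀ i < (Order.succ mu).ord, x.val < (α i).val → ∃ j < i, x = α j) :
    ∃ istar < (Order.succ mu).ord, ∀ i < (Order.succ mu).ord,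
      ∀ x ∈ Substructure.closure L {α i}, x.val < lam.ord →
        ∃ j < istar, x ∈ Substructure.closure L {α j} := by
  set S := {x : {o : Ordinal // o < (Order.succ lam).ord} | x ∈ N ∧ x.val < lam.ord}
  have hα : InjOn α (Iio (Order.succ mu).ord) :=
    StrictMonoOn.injOn fun i _ j hj hij => hmono i j hij hj
  have hS_lt : Cardinal.lift.{0} #S < Cardinal.lift.{1} (Order.succ mu) := by
    rw [hN₂]
    simp
  have hS_enum : ∀ x ∈ S, ∃ j < (Order.succ mu).ord, x = α j := by
    intro x hx
    obtain ⟨i, hi, hiS⟩ := Ordinal.exists_lt_notMem_of_lift_mk_lt hα (by rwa [card_ord])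
    obtain ⟨j, hj, rfl⟩ :=
      hinit x hx.1 i hi (hx.2.trans_le (not_lt.1 fun h => hiS ⟨hmem i hi, h⟩))
    exact ⟨j, hj.trans hi, rfl⟩
  obtain ⟨istar, histar, hbound⟩ := Ordinal.exists_lt_forall_eq_of_lift_mk_lt_cof hα
    (by rwa [(isRegular_succ hmu).cof_ord]) hS_enum
  refine ⟨istar, histar, fun i hi x hx hxlam => ?_⟩
  have hxN : x ∈ N := Substructure.closure_le.2 (singleton_subset_iff.2 (hmem i hi)) hx
  obtain ⟨j, hj, rfl⟩ := hbound x ⟨hxN, hxlam⟩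
  exact ⟨j, hj, Substructure.subset_closure rfl⟩

theorem stmt12 (lam mu : Cardinal.{0}) (hmu : ℵ₀ ≤ mu) (hlt : mu < lam)
    (hch : ChangTransfer lam mu)
    (L : FirstOrder.Language.{0, 0}) (hL : L.card ≤ lam.ord.cof)
    (hcf : lam.ord.cof ≤ mu)
    (inst : L.Structure {o : Ordinal // o < (Order.succ lam).ord})
    -- `N ≺ M` with `|N| = μ⁺` and `|N ∩ λ| = μ`
    (N : L.ElementarySubstructure {o : Ordinal // o < (Order.succ lam).ord})
    (hN₁ : #N = Cardinal.lift.{1} (Order.succ mu))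
    (hN₂ : #{x : {o : Ordinal // o < (Order.succ lam).ord} | x ∈ N ∧ x.val < lam.ord}
      = Cardinal.lift.{1} mu)
    -- `⟨α_i : i < μ⁺⟩` enumerates in increasing order the first `μ⁺` elements of `N`
    (α : Ordinal → {o : Ordinal // o < (Order.succ lam).ord})
    (hmem : ∀ i < (Order.succ mu).ord, α i ∈ N)
    (hmono : ∀ i j : Ordinal, i < j → j < (Order.succ mu).ord → (α i).val < (α j).val)
    (hinit : ∀ x ∈ N, ∀ i < (Order.succ mu).ord, x.val < (α i).val → ∃ j < i, x = α j) :
    ∃ istar < (Order.succ mu).ord, ∀ i < (Order.succ mu).ord,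
      ∀ x ∈ Substructure.closure L {α i}, x.val < lam.ord →
        ∃ j < istar, x ∈ Substructure.closure L {α j} :=
  stmt12_general lam mu hmu L inst N hN₂ α hmem hmono hinit
end
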